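/- arXiv:2304.13780 — 3 statements merged into one kernel-verified Lean document; each statement's English description precedes it below -/
import Mathlib

section
/- For a 2d-index tensor that is an outer product of d antisymmetric 2d×2d matrices G^1, ..., G^d, the hyper-Pfaffian hpf(G^1 ⊗ ... ⊗ G^d) = (1/(2d)!) Σ_{σ ∈ S_{2d}} sgn(σ) G^1_{σ(1)σ(2)} G^2_{σ(3)σ(4)} ⋯ G^d_{σ(2d-1)σ(2d)} is totally symmetric in the matrices: it is invariant under any permutation of (G^1, ..., G^d). -/
open scoped BigOperators Matrix

/-- Hyper-Pfaffian of the outer product of `d` matrices of size `2d × 2d`: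
`hpf(G¹ ⊗ ⋯ ⊗ G^d) = (1/(2d)!) Σ_{σ ∈ S_{2d}} sgn(σ) Π_p G^p_{σ(2p-1) σ(2p)}`. -/
noncomputable def hpfOuter {R : Type*} [CommRing R] [Algebra ℚ R] (d : ℕ)
    (G : Fin d → Matrix (Fin (2 * d)) (Fin (2 * d)) R) : R :=
  algebraMap ℚ R (1 / Nat.factorial (2 * d)) *
    ∑ σ : Equiv.Perm (Fin (2 * d)), (Equiv.Perm.sign σ : ℤ) •
      ∏ p : Fin d,
        G p (σ ⟨2 * p, by have := p.isLt; omega⟩)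
            (σ ⟨2 * p + 1, by have := p.isLt; omega⟩)

/-!
Relabelling the matrices by `τ` amounts to moving the index pair `(2p, 2p+1)` to
`(2τ(p), 2τ(p)+1)`. This block permutation of `Fin (2d)` acts on both halves of
`Fin d × Fin 2` by `τ`, so its sign is `sgn(τ)² = 1`, and composing with it
reindexes the sum over `S_{2d}` without changing any sign.
-/

open Equiv

namespace HyperPfaffian

variable {d : ℕ}

def pairEquiv (d : ℕ) : Fin d × Fin 2 ≃ Fin (2 * d) :=
  finProdFinEquiv.trans (finCongr (mul_comm d 2))

@[simp]
lemma val_pairEquiv (p : Fin d) (i : Fin 2) : (pairEquiv d (p, i) : ℕ) = 2 * p + i := by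
  simp [pairEquiv]; ring

def blockPerm (τ : Perm (Fin d)) : Perm (Fin (2 * d)) :=
  (pairEquiv d).permCongr (prodCongrLeft fun _ => τ)

@[simp]
lemma blockPerm_apply_pairEquiv (τ : Perm (Fin d)) (p : Fin d) (i : Fin 2) :
    blockPerm τ (pairEquiv d (p, i)) = pairEquiv d (τ p, i) := by
  simp [blockPerm, permCongr_apply]

@[simp]
lemma sign_blockPerm (τ : Perm (Fin d)) : Perm.sign (blockPerm τ) = 1 := by
  rw [blockPerm, Perm.sign_permCongr, Perm.sign_prodCongrLeft, Fin.prod_univ_two,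
    Int.units_mul_self]

lemma hpfOuter_eq_sum_pairEquiv {R : Type*} [CommRing R] [Algebra ℚ R]
    (G : Fin d → Matrix (Fin (2 * d)) (Fin (2 * d)) R) :
    hpfOuter d G = algebraMap ℚ R (1 / Nat.factorial (2 * d)) *
      ∑ σ : Perm (Fin (2 * d)), (Perm.sign σ : ℤ) •
        ∏ p : Fin d, G p (σ (pairEquiv d (p, 0))) (σ (pairEquiv d (p, 1))) := by
  have h0 (p : Fin d) : pairEquiv d (p, 0) = ⟨2 * p, by omega⟩ := Fin.ext (by simp)
  have h1 (p : Fin d) : pairEquiv d (p, 1) = ⟨2 * p + 1, by omega⟩ := Fin.ext (by simp)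
  simp only [hpfOuter, h0, h1]

end HyperPfaffian

open HyperPfaffian in
theorem stmt4_general {R : Type*} [CommRing R] [Algebra ℚ R] (d : ℕ)
    (G : Fin d → Matrix (Fin (2 * d)) (Fin (2 * d)) R)
    (τ : Equiv.Perm (Fin d)) :
    hpfOuter d (fun r => G (τ r)) = hpfOuter d G := by
  rw [hpfOuter_eq_sum_pairEquiv, hpfOuter_eq_sum_pairEquiv]
  congr 1
  refine Fintype.sum_equiv (Equiv.mulRight (blockPerm τ⁻¹)) _ _ fun σ => ?_
  simp only [coe_mulRight, map_mul, sign_blockPerm, mul_one, Perm.mul_apply,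
    blockPerm_apply_pairEquiv]
  congr 1
  exact Fintype.prod_equiv τ _ _ fun p => by simp

/-- The hyper-Pfaffian of an outer product of antisymmetric matrices is totally
symmetric in the matrices. -/
theorem stmt4 {R : Type*} [CommRing R] [Algebra ℚ R] (d : ℕ)
    (G : Fin d → Matrix (Fin (2 * d)) (Fin (2 * d)) R)
    (hG : ∀ r, (G r)ᵀ = -(G r)) (τ : Equiv.Perm (Fin d)) :
    hpfOuter d (fun r => G (τ r)) = hpfOuter d G :=
  stmt4_general d G τ
end

section
/- Let U⁰,V⁰,U¹,V¹ be M×M complex matrices with V⁰, V¹, and Ξ := (U⁰)†U¹ + (V⁰)†V¹ invertible, and suppose (U^j)ᵀ V^j + (V^j)ᵀ U^j = 0 for j = 0,1. Then the Schur complement of the block -(V¹)†V⁰ in S̃ = [[-(V¹)†V⁰, (U¹)†(V¹)*],[(V⁰)ᵀU⁰, (V⁰)ᵀ(V¹)*]] equals Ξ*, i.e., (V⁰)ᵀ(V¹)* - (V⁰)ᵀU⁰(-(V¹)†V⁰)⁻¹(U¹)†(V¹)* = conj(Ξ). -/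
/-!
The antisymmetry relations give `(V⁰)ᵀU⁰ = -(U⁰)ᵀV⁰` and, after conjugation,
`(U¹)†(V¹)* = -(V¹)†(U¹)*`. The correction term of the Schur complement thus becomes
`-(U⁰)ᵀ · V⁰((V¹)†V⁰)⁻¹(V¹)† · (U¹)* = -(U⁰)ᵀ(U¹)*`, and
`(V⁰)ᵀ(V¹)* + (U⁰)ᵀ(U¹)*` is the entrywise conjugate of `Ξ`.
-/

open scoped Matrix

namespace Matrix

section Inverse

variable {n α : Type*} [Fintype n] [DecidableEq n] [CommRing α]

theorem inv_neg_of_isUnit_det {A : Matrix n n α} (hA : IsUnit A.det) : (-A)⁻¹ = -A⁻¹ :=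
  inv_eq_left_inv <| by rw [neg_mul_neg, nonsing_inv_mul A hA]

/-- `(A * B)⁻¹ * A` is a left, hence also a right, inverse of `B`. -/
theorem mul_nonsing_inv_mul_cancel {A B : Matrix n n α} (hAB : IsUnit (A * B).det) :
    B * ((A * B)⁻¹ * A) = 1 :=
  mul_eq_one_comm.2 <| by rw [Matrix.mul_assoc, nonsing_inv_mul _ hAB]

end Inverse

section Conjugate

variable {m n o α : Type*} [Fintype n] [CommRing α] [StarRing α]

theorem map_star_transpose_mul (A : Matrix n m α) (B : Matrix n o α) :
    (Aᵀ * B).map (starRingEnd α) = Aᴴ * B.map (starRingEnd α) := by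
  rw [Matrix.map_mul]; rfl

theorem map_star_conjTranspose_mul (A : Matrix n m α) (B : Matrix n o α) :
    (Aᴴ * B).map (starRingEnd α) = Aᵀ * B.map (starRingEnd α) := by
  rw [Matrix.map_mul]; congr 1; ext; exact star_star _

end Conjugate

end Matrix

theorem stmt11_general {M : ℕ} (U₀ V₀ U₁ V₁ : Matrix (Fin M) (Fin M) ℂ)
    (hVV : IsUnit (V₁ᴴ * V₀).det)
    (h0 : U₀ᵀ * V₀ + V₀ᵀ * U₀ = 0)
    (h1 : U₁ᵀ * V₁ + V₁ᵀ * U₁ = 0) :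
    V₀ᵀ * (V₁.map (starRingEnd ℂ)) -
      V₀ᵀ * U₀ * (-(V₁ᴴ * V₀))⁻¹ * (U₁ᴴ * (V₁.map (starRingEnd ℂ)))
      = (U₀ᴴ * U₁ + V₀ᴴ * V₁).map (starRingEnd ℂ) := by
  have hV₀U₀ : V₀ᵀ * U₀ = -(U₀ᵀ * V₀) := eq_neg_of_add_eq_zero_right h0
  have hU₁V₁ : U₁ᴴ * V₁.map (starRingEnd ℂ) = -(V₁ᴴ * U₁.map (starRingEnd ℂ)) := by
    rw [← Matrix.map_star_transpose_mul, ← Matrix.map_star_transpose_mul,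
      ← Matrix.map_neg _ (map_neg _), eq_neg_of_add_eq_zero_left h1]
  rw [Matrix.inv_neg_of_isUnit_det hVV, hV₀U₀, hU₁V₁, Matrix.map_add _ (map_add _),
    Matrix.map_star_conjTranspose_mul, Matrix.map_star_conjTranspose_mul]
  simp only [neg_mul, mul_neg, neg_neg, sub_neg_eq_add, Matrix.mul_assoc]
  rw [← Matrix.mul_assoc (V₁ᴴ * V₀)⁻¹, ← Matrix.mul_assoc V₀,
    Matrix.mul_nonsing_inv_mul_cancel hVV, Matrix.one_mul, add_comm]

/-- The Schur complement of the block `-(V¹)†V⁰` in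
`S̃ = [[-(V¹)†V⁰, (U¹)†(V¹)*],[(V⁰)ᵀU⁰, (V⁰)ᵀ(V¹)*]]` equals `Ξ*`. -/
theorem stmt11 {M : ℕ} (U₀ V₀ U₁ V₁ : Matrix (Fin M) (Fin M) ℂ)
    (hV₀ : IsUnit V₀.det) (hV₁ : IsUnit V₁.det)
    (hVV : IsUnit (V₁ᴴ * V₀).det)
    (hΞ : IsUnit (U₀ᴴ * U₁ + V₀ᴴ * V₁).det)
    (h0 : U₀ᵀ * V₀ + V₀ᵀ * U₀ = 0)
    (h1 : U₁ᵀ * V₁ + V₁ᵀ * U₁ = 0) :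
    V₀ᵀ * (V₁.map (starRingEnd ℂ)) -
      V₀ᵀ * U₀ * (-(V₁ᴴ * V₀))⁻¹ * (U₁ᴴ * (V₁.map (starRingEnd ℂ)))
      = (U₀ᴴ * U₁ + V₀ᴴ * V₁).map (starRingEnd ℂ) :=
  stmt11_general U₀ V₀ U₁ V₁ hVV h0 h1
end

section
/- Under the assumptions of the Onishi formula setup (V⁰, V¹ invertible, unitary Bogoliubov matrices W⁰, W¹), det(S) = det(V¹† V⁰) · det(Ξ*), where S = J⁻¹ S̃ with S̃ = [[-(V¹)†V⁰, (U¹)†(V¹)*],[(V⁰)ᵀU⁰, (V⁰)ᵀ(V¹)*]], J = [[0,I],[I,0]], and Ξ = (U⁰)†U¹ + (V⁰)†V¹. -/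
open scoped Matrix

namespace OnishiAux

open Matrix

lemma detJ (M : ℕ) :
    (fromBlocks (0 : Matrix (Fin M) (Fin M) ℂ) (1 : Matrix (Fin M) (Fin M) ℂ)
      (1 : Matrix (Fin M) (Fin M) ℂ) 0).det = (-1 : ℂ)^M := by
  have h : (fromBlocks (0 : Matrix (Fin M) (Fin M) ℂ) (1 : Matrix (Fin M) (Fin M) ℂ)
      (1 : Matrix (Fin M) (Fin M) ℂ) 0) =
      fromBlocks (-1) 0 0 1 *
        (fromBlocks 1 (-1) 0 1 * (fromBlocks (1 : Matrix (Fin M) (Fin M) ℂ) 0 1 1 *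
          fromBlocks (1 : Matrix (Fin M) (Fin M) ℂ) (-1) 0 1)) := by
    simp [fromBlocks_multiply]
  rw [h]
  simp [det_mul, det_fromBlocks_zero₂₁, det_fromBlocks_zero₁₂, det_neg]

/-- From unitarity of the Bogoliubov matrix: `Vᵀ U + Uᵀ V = 0`. -/
lemma antisym {M : ℕ} (U V : Matrix (Fin M) (Fin M) ℂ)
    (hW : Matrix.fromBlocks U (V.map (starRingEnd ℂ)) V (U.map (starRingEnd ℂ))
      ∈ Matrix.unitaryGroup (Fin M ⊕ Fin M) ℂ) :
    Vᵀ * U + Uᵀ * V = 0 := by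
  have h := hW.1
  rw [Matrix.star_eq_conjTranspose, fromBlocks_conjTranspose, ← fromBlocks_one (l := Fin M),
    fromBlocks_multiply, fromBlocks_inj] at h
  have h2 := h.2.2.1
  have e1 : (V.map (starRingEnd ℂ))ᴴ = Vᵀ := by
    ext i j; simp [conjTranspose_apply]
  have e2 : (U.map (starRingEnd ℂ))ᴴ = Uᵀ := by
    ext i j; simp [conjTranspose_apply]
  rwa [e1, e2] at h2

/-- `(Xᴴ Y).map conj = Xᵀ (Y.map conj)`. -/
lemma conj_herm_mul {M : ℕ} (X Y : Matrix (Fin M) (Fin M) ℂ) :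
    (Xᴴ * Y).map (starRingEnd ℂ) = Xᵀ * (Y.map (starRingEnd ℂ)) := by
  ext i j
  simp [Matrix.mul_apply, Matrix.map_apply, Matrix.conjTranspose_apply, map_sum]

end OnishiAux

/-- Onishi formula: `det S = det(V¹† V⁰) · det(Ξ*)` where `S = J⁻¹ S̃`. -/
theorem stmt12 {M : ℕ} (U₀ V₀ U₁ V₁ : Matrix (Fin M) (Fin M) ℂ)
    (hW₀ : Matrix.fromBlocks U₀ (V₀.map (starRingEnd ℂ)) V₀ (U₀.map (starRingEnd ℂ))
      ∈ Matrix.unitaryGroup (Fin M ⊕ Fin M) ℂ)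
    (hW₁ : Matrix.fromBlocks U₁ (V₁.map (starRingEnd ℂ)) V₁ (U₁.map (starRingEnd ℂ))
      ∈ Matrix.unitaryGroup (Fin M ⊕ Fin M) ℂ)
    (hV₀ : IsUnit V₀.det) (hV₁ : IsUnit V₁.det)
    (hVV : IsUnit (V₁ᴴ * V₀).det) :
    ((Matrix.fromBlocks (0 : Matrix (Fin M) (Fin M) ℂ)
        (1 : Matrix (Fin M) (Fin M) ℂ) (1 : Matrix (Fin M) (Fin M) ℂ) 0)⁻¹ *
      Matrix.fromBlocks (-(V₁ᴴ * V₀)) (U₁ᴴ * (V₁.map (starRingEnd ℂ)))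
        (V₀ᵀ * U₀) (V₀ᵀ * (V₁.map (starRingEnd ℂ)))).det
      = (V₁ᴴ * V₀).det * ((U₀ᴴ * U₁ + V₀ᴴ * V₁).map (starRingEnd ℂ)).det := by
  open Matrix OnishiAux in
  set J : Matrix (Fin M ⊕ Fin M) (Fin M ⊕ Fin M) ℂ :=
    fromBlocks (0 : Matrix (Fin M) (Fin M) ℂ) (1 : Matrix (Fin M) (Fin M) ℂ)
      (1 : Matrix (Fin M) (Fin M) ℂ) 0 with hJdef
  set A : Matrix (Fin M) (Fin M) ℂ := V₁ᴴ * V₀ with hAdef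
  set B : Matrix (Fin M) (Fin M) ℂ := U₁ᴴ * (V₁.map (starRingEnd ℂ)) with hBdef
  set C : Matrix (Fin M) (Fin M) ℂ := V₀ᵀ * U₀ with hCdef
  set D : Matrix (Fin M) (Fin M) ℂ := V₀ᵀ * (V₁.map (starRingEnd ℂ)) with hDdef
  -- J is self-inverse
  have hJJ : J * J = 1 := by
    rw [hJdef, fromBlocks_multiply]
    simp
  have hJinv : J⁻¹ = J := Matrix.inv_eq_right_inv hJJ
  -- invertibility
  haveI : Invertible A := Matrix.invertibleOfIsUnitDet A hVV
  haveI : Invertible (-A) := invertibleNeg A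
  have hAinv : (-A)⁻¹ = -(A⁻¹) := by
    apply Matrix.inv_eq_right_inv
    rw [neg_mul_neg, Matrix.mul_nonsing_inv A hVV]
  -- the key Schur-complement identity: C * A⁻¹ * B = U₀ᵀ * U₁*
  have h₀ : V₀ᵀ * U₀ = -(U₀ᵀ * V₀) :=
    eq_neg_of_add_eq_zero_left (antisym U₀ V₀ hW₀)
  have h₁ : V₁ᵀ * U₁ = -(U₁ᵀ * V₁) :=
    eq_neg_of_add_eq_zero_left (antisym U₁ V₁ hW₁)
  have hC : V₀ᵀ * U₀ * V₀⁻¹ = -U₀ᵀ := by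
    rw [h₀, Matrix.neg_mul, Matrix.mul_assoc, Matrix.mul_nonsing_inv V₀ hV₀,
      Matrix.mul_one]
  have hV₁H : IsUnit (V₁ᴴ).det := by
    rw [Matrix.det_conjTranspose]; exact hV₁.star
  have hB : U₁ᴴ * (V₁.map (starRingEnd ℂ)) = -(V₁ᴴ * (U₁.map (starRingEnd ℂ))) := by
    have := congrArg Matrix.conjTranspose h₁
    simp only [Matrix.conjTranspose_mul, Matrix.conjTranspose_neg] at this
    have e1 : (V₁ᵀ)ᴴ = V₁.map (starRingEnd ℂ) := by
      ext i j; simp [Matrix.conjTranspose_apply]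
    have e2 : (U₁ᵀ)ᴴ = U₁.map (starRingEnd ℂ) := by
      ext i j; simp [Matrix.conjTranspose_apply]
    rwa [e1, e2] at this
  have hVB : (V₁ᴴ)⁻¹ * (U₁ᴴ * (V₁.map (starRingEnd ℂ))) = -(U₁.map (starRingEnd ℂ)) := by
    rw [hB, Matrix.mul_neg, Matrix.nonsing_inv_mul_cancel_left _ _ hV₁H]
  have hkey : (V₀ᵀ * U₀) * (V₁ᴴ * V₀)⁻¹ * (U₁ᴴ * (V₁.map (starRingEnd ℂ)))
      = U₀ᵀ * (U₁.map (starRingEnd ℂ)) := by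
    rw [Matrix.mul_inv_rev]
    calc (V₀ᵀ * U₀) * (V₀⁻¹ * (V₁ᴴ)⁻¹) * (U₁ᴴ * (V₁.map (starRingEnd ℂ)))
        = (V₀ᵀ * U₀ * V₀⁻¹) * ((V₁ᴴ)⁻¹ * (U₁ᴴ * (V₁.map (starRingEnd ℂ)))) := by
          simp only [Matrix.mul_assoc]
      _ = (-U₀ᵀ) * (-(U₁.map (starRingEnd ℂ))) := by rw [hC, hVB]
      _ = U₀ᵀ * (U₁.map (starRingEnd ℂ)) := by rw [neg_mul_neg]
  -- rewrite the RHS determinant argument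
  have hRHS : (U₀ᴴ * U₁ + V₀ᴴ * V₁).map (starRingEnd ℂ)
      = U₀ᵀ * (U₁.map (starRingEnd ℂ)) + V₀ᵀ * (V₁.map (starRingEnd ℂ)) := by
    have h' : (U₀ᴴ * U₁ + V₀ᴴ * V₁).map (starRingEnd ℂ)
        = (U₀ᴴ * U₁).map (starRingEnd ℂ) + (V₀ᴴ * V₁).map (starRingEnd ℂ) := by
      ext i j
      simp only [Matrix.map_apply, Matrix.add_apply, map_add]
    rw [h', conj_herm_mul, conj_herm_mul]
  -- compute the determinant
  rw [hJinv, Matrix.det_mul, hJdef, detJ]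
  rw [Matrix.det_fromBlocks₁₁, Matrix.invOf_eq_nonsing_inv, hAinv, Matrix.det_neg,
    Fintype.card_fin]
  rw [Matrix.mul_neg, Matrix.neg_mul, sub_neg_eq_add, hAdef, hBdef, hCdef, hDdef,
    hkey, hRHS, add_comm (V₀ᵀ * (V₁.map (starRingEnd ℂ)))]
  ring_nf
  have hpow : ((-1 : ℂ)) ^ (M * 2) = 1 := by
    rw [mul_comm, pow_mul]; norm_num
  rw [hpow, mul_one]
end
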